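/- (SHEL network as the expectation of a randomised sign predictor) Let d, K ∈ ℕ⁺, β > 0, U ∈ ℝ^{K×d} with rows u_1,…,u_K, and v ∈ ℝ^K with v ≠ 0. Define the mixture distribution Q on ℝ^d with 2K Gaussian components: component k ∈ {1,…,K} is N(u_k, (1/(2β²))·I_d) with weight max(0, v_k)/‖v‖₁, and component K+k is N(−u_k, (1/(2β²))·I_d) with weight max(0, −v_k)/‖v‖₁. Then for every x ∈ ℝ^d with x ≠ 0: E_{w∼Q}[ sign(w · x) ] = (1/‖v‖₁) · Σ_{k=1}^K v_k · erf( β · (u_k · x)/‖x‖₂ ). -/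

import Mathlib

/-!
For `w ∼ N(m, σ²I)` the projection `w·x` is a one-dimensional Gaussian, and `sign` does not
change when `x` is scaled by a positive factor; scaling `x` to `(β/‖x‖) x` makes the projection
`N(β m·x/‖x‖, 1/2)`. For `N(a, 1/2)`, by the symmetry of the centred density `e^{-t²}/√π`,
`E[sign] = P(t > 0) - P(t < 0) = (1/√π) ∫_{-a}^{a} e^{-t²} dt = erf a`.
The mixture then averages `erf(±β u_k·x/‖x‖) = ± erf(β u_k·x/‖x‖)` with weights
`max(0, ±v_k)/‖v‖₁`, and `max(0, v_k) - max(0, -v_k) = v_k`.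
-/

open MeasureTheory ProbabilityTheory
open scoped ENNReal NNReal

/-- The Gaussian error function `erf(t) = (2/√π) ∫₀ᵗ e^(−s²) ds`. -/
noncomputable def erf (t : ℝ) : ℝ :=
  2 / Real.sqrt Real.pi * ∫ s in (0 : ℝ)..t, Real.exp (-(s ^ 2))

/-- The multivariate Gaussian `N(μ, σ²I_d)` on `ℝ^d`, as a product of independent
one-dimensional Gaussians with means `μ i` and common variance `σ²`. -/
noncomputable def gaussPi {d : ℕ} (μ : Fin d → ℝ) (v : ℝ≥0) : Measure (Fin d → ℝ) :=
  Measure.pi fun i => gaussianReal (μ i) v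

open Set

lemma Real.sign_eq_indicator_sub (t : ℝ) :
    Real.sign t = (Ioi 0).indicator 1 t - (Iio 0).indicator 1 t := by
  rcases lt_trichotomy t 0 with h | rfl | h
  · simp [Real.sign_of_neg h, h, h.not_gt]
  · simp
  · simp [Real.sign_of_pos h, h, h.not_gt]

lemma Real.measurable_sign : Measurable Real.sign := by
  simp_rw [funext Real.sign_eq_indicator_sub]
  exact (measurable_one.indicator measurableSet_Ioi).sub
    (measurable_one.indicator measurableSet_Iio)

lemma Real.abs_sign_le_one (t : ℝ) : |Real.sign t| ≤ 1 := by
  rcases Real.sign_apply_eq t with h | h | h <;> simp [h]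

lemma Real.sign_mul_of_pos {c : ℝ} (hc : 0 < c) (t : ℝ) : Real.sign (c * t) = Real.sign t := by
  rcases lt_trichotomy t 0 with h | rfl | h
  · rw [Real.sign_of_neg h, Real.sign_of_neg (mul_neg_of_pos_of_neg hc h)]
  · rw [mul_zero]
  · rw [Real.sign_of_pos h, Real.sign_of_pos (mul_pos hc h)]

lemma integral_sign_eq_measureReal_Ioi_sub_Iio (μ : Measure ℝ) [IsFiniteMeasure μ] :
    ∫ t, Real.sign t ∂μ = μ.real (Ioi 0) - μ.real (Iio 0) := by
  simp_rw [Real.sign_eq_indicator_sub]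
  rw [integral_sub ((integrable_const 1).indicator measurableSet_Ioi)
    ((integrable_const 1).indicator measurableSet_Iio)]
  simp [integral_indicator_one measurableSet_Ioi, integral_indicator_one measurableSet_Iio]

lemma measureReal_gaussianReal_eq_integral (m : ℝ) {v : ℝ≥0} (hv : v ≠ 0) (s : Set ℝ) :
    (gaussianReal m v).real s = ∫ t in s, gaussianPDFReal m v t := by
  rw [measureReal_def, gaussianReal_apply_eq_integral m hv,
    ENNReal.toReal_ofReal (setIntegral_nonneg_of_ae (ae_of_all _ (gaussianPDFReal_nonneg m v)))]

lemma measureReal_gaussianReal_Ioi_sub_Iio (m : ℝ) {v : ℝ≥0} (hv : v ≠ 0) :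
    (gaussianReal m v).real (Ioi 0) - (gaussianReal m v).real (Iio 0)
      = ∫ t in -m..m, gaussianPDFReal 0 v t := by
  have h_shift : gaussianReal m v = (gaussianReal 0 v).map (· + m) := by
    rw [gaussianReal_map_add_const, zero_add]
  have h_symm : (gaussianReal 0 v).real (Iio (-m)) = (gaussianReal 0 v).real (Ioi m) := calc
    _ = ((gaussianReal 0 v).map (-·)).real (Iio (-m)) := by rw [gaussianReal_map_neg, neg_zero]
    _ = _ := by
      rw [map_measureReal_apply measurable_neg measurableSet_Iio, neg_preimage, neg_Iio, neg_neg]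
  have h_int := integrable_gaussianPDFReal 0 v
  rw [h_shift, map_measureReal_apply (by fun_prop) measurableSet_Ioi,
    map_measureReal_apply (by fun_prop) measurableSet_Iio, preimage_add_const_Ioi,
    preimage_add_const_Iio, zero_sub, h_symm, measureReal_gaussianReal_eq_integral 0 hv,
    measureReal_gaussianReal_eq_integral 0 hv,
    intervalIntegral.integral_Ioi_sub_Ioi' h_int.integrableOn h_int.integrableOn]

lemma gaussianPDFReal_zero_half (t : ℝ) :
    gaussianPDFReal 0 2⁻¹ t = (Real.sqrt Real.pi)⁻¹ * Real.exp (-(t ^ 2)) := by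
  simp only [gaussianPDFReal, NNReal.coe_inv, NNReal.coe_ofNat, sub_zero]
  congr 2 <;> field_simp

lemma erf_eq_integral_gaussianPDFReal (a : ℝ) :
    erf a = ∫ t in -a..a, gaussianPDFReal 0 2⁻¹ t := by
  have h_even : ∫ t in -a..0, Real.exp (-(t ^ 2)) = ∫ t in 0..a, Real.exp (-(t ^ 2)) := by
    have h := intervalIntegral.integral_comp_neg (a := 0) (b := a) fun t => Real.exp (-(t ^ 2))
    simp only [neg_sq, neg_zero] at h
    exact h.symm
  have h_int (b c : ℝ) : IntervalIntegrable (fun t => Real.exp (-(t ^ 2))) volume b c :=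
    (by fun_prop : Continuous fun t : ℝ => Real.exp (-(t ^ 2))).intervalIntegrable b c
  simp_rw [gaussianPDFReal_zero_half, intervalIntegral.integral_const_mul]
  rw [← intervalIntegral.integral_add_adjacent_intervals (h_int _ 0) (h_int 0 _), h_even, erf]
  ring

lemma erf_neg (a : ℝ) : erf (-a) = -erf a := by
  rw [erf_eq_integral_gaussianPDFReal, erf_eq_integral_gaussianPDFReal, neg_neg,
    intervalIntegral.integral_symm]

lemma integral_sign_gaussianReal (a : ℝ) : ∫ t, Real.sign t ∂gaussianReal a 2⁻¹ = erf a := by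
  rw [integral_sign_eq_measureReal_Ioi_sub_Iio,
    measureReal_gaussianReal_Ioi_sub_Iio a (by norm_num), erf_eq_integral_gaussianPDFReal]

lemma gaussianReal_pi_map_sum {ι : Type*} [Fintype ι] (m : ι → ℝ) (v : ι → ℝ≥0) :
    (Measure.pi fun i => gaussianReal (m i) (v i)).map (fun p => ∑ i, p i)
      = gaussianReal (∑ i, m i) (∑ i, v i) := by
  apply Measure.ext_of_charFun
  ext t
  simp only [charFun_map_sum_pi_eq_prod, Finset.prod_apply, charFun_gaussianReal,
    ← Complex.exp_sum]
  push_cast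
  rw [Finset.sum_sub_distrib, Finset.mul_sum, Finset.sum_mul, Finset.sum_mul, Finset.sum_div]

lemma gaussianReal_pi_map_dotProduct {ι : Type*} [Fintype ι] (m y : ι → ℝ) (v : ℝ≥0) :
    (Measure.pi fun i => gaussianReal (m i) v).map (fun w => ∑ i, w i * y i)
      = gaussianReal (∑ i, m i * y i) ((∑ i, y i ^ 2).toNNReal * v) := by
  have h_coord : (Measure.pi fun i => gaussianReal (m i) v).map (fun w i => w i * y i)
      = Measure.pi fun i => gaussianReal (y i * m i) ((y i ^ 2).toNNReal * v) := by
    rw [Measure.pi_map_pi fun i => (measurable_mul_const (y i)).aemeasurable]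
    simp_rw [gaussianReal_map_mul_const, Real.toNNReal_of_nonneg (sq_nonneg _)]
  have h_comp : (fun w : ι → ℝ => ∑ i, w i * y i) = (fun p => ∑ i, p i) ∘ fun w i => w i * y i :=
    rfl
  rw [h_comp, ← Measure.map_map (by fun_prop) (by fun_prop), h_coord, gaussianReal_pi_map_sum,
    Real.toNNReal_sum_of_nonneg fun i _ => sq_nonneg (y i), Finset.sum_mul]
  simp_rw [mul_comm (y _)]

lemma integrable_sign_comp {α : Type*} [MeasurableSpace α] (μ : Measure α) [IsFiniteMeasure μ]
    {g : α → ℝ} (hg : Measurable g) : Integrable (fun a => Real.sign (g a)) μ :=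
  (integrable_const 1).mono' (Real.measurable_sign.comp hg).aestronglyMeasurable
    (ae_of_all _ fun a => Real.abs_sign_le_one (g a))

lemma integral_finsetSum_ofReal_smul_measure {α ι : Type*} [MeasurableSpace α] {f : α → ℝ}
    {μ : ι → Measure α} {c : ι → ℝ} (s : Finset ι) (hc : ∀ k ∈ s, 0 ≤ c k)
    (hf : ∀ k ∈ s, Integrable f (μ k)) :
    ∫ a, f a ∂(∑ k ∈ s, ENNReal.ofReal (c k) • μ k) = ∑ k ∈ s, c k * ∫ a, f a ∂μ k := by
  rw [integral_finsetSum_measure fun k hk => (hf k hk).smul_measure ENNReal.ofReal_ne_top]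
  refine Finset.sum_congr rfl fun k hk => ?_
  rw [integral_smul_measure, ENNReal.toReal_ofReal (hc k hk), smul_eq_mul]

instance isProbabilityMeasure_gaussPi {d : ℕ} (μ : Fin d → ℝ) (v : ℝ≥0) :
    IsProbabilityMeasure (gaussPi μ v) := by
  unfold gaussPi; infer_instance

lemma integral_sign_dotProduct_gaussPi {d : ℕ} (m x : Fin d → ℝ) {β : ℝ} (hβ : 0 < β) :
    ∫ w, Real.sign (∑ i, w i * x i) ∂gaussPi m (Real.toNNReal (1 / (2 * β ^ 2)))
      = erf (β * (∑ i, m i * x i) / Real.sqrt (∑ i, x i ^ 2)) := by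
  by_cases hx : x = 0
  · simp [hx, erf]
  set r := Real.sqrt (∑ i, x i ^ 2)
  have hr : 0 < r := by
    obtain ⟨i, hi⟩ := Function.ne_iff.mp hx
    exact Real.sqrt_pos.2 <| Finset.sum_pos' (fun j _ => sq_nonneg (x j))
      ⟨i, Finset.mem_univ i, pow_two_pos_of_ne_zero hi⟩
  set y : Fin d → ℝ := fun i => β / r * x i
  have h_sign (w : Fin d → ℝ) : Real.sign (∑ i, w i * x i) = Real.sign (∑ i, w i * y i) := by
    rw [show ∑ i, w i * y i = β / r * ∑ i, w i * x i by
      rw [Finset.mul_sum]; exact Finset.sum_congr rfl fun i _ => by ring,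
      Real.sign_mul_of_pos (by positivity)]
  have h_var : (∑ i, y i ^ 2).toNNReal * (1 / (2 * β ^ 2)).toNNReal = 2⁻¹ := by
    have h_sq : ∑ i, y i ^ 2 = β ^ 2 := calc
      ∑ i, y i ^ 2 = (β / r) ^ 2 * r ^ 2 := by
        rw [Real.sq_sqrt (by positivity), Finset.mul_sum]
        simp only [y, mul_pow]
      _ = β ^ 2 := by field_simp
    rw [h_sq, ← Real.toNNReal_mul (by positivity),
      show β ^ 2 * (1 / (2 * β ^ 2)) = 2⁻¹ by field_simp]
    simp [Real.toNNReal_inv]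
  simp_rw [h_sign]
  have h_meas : Measurable fun w : Fin d → ℝ => ∑ i, w i * y i := by fun_prop
  rw [gaussPi, ← integral_map h_meas.aemeasurable Real.measurable_sign.aestronglyMeasurable,
    gaussianReal_pi_map_dotProduct, h_var, integral_sign_gaussianReal, Finset.mul_sum,
    Finset.sum_div]
  exact congrArg erf (Finset.sum_congr rfl fun i _ => by ring)

theorem shel_as_expectation_general
    (d K : ℕ) (β : ℝ) (hβ : 0 < β)
    (u : Fin K → Fin d → ℝ) (v : Fin K → ℝ)
    (x : Fin d → ℝ) :
    (∫ w, Real.sign (∑ i, w i * x i)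
        ∂((∑ k : Fin K, ENNReal.ofReal (max 0 (v k) / ∑ j, |v j|) •
              gaussPi (u k) (Real.toNNReal (1 / (2 * β ^ 2)))) +
          ∑ k : Fin K, ENNReal.ofReal (max 0 (-v k) / ∑ j, |v j|) •
              gaussPi (fun i => -(u k i)) (Real.toNNReal (1 / (2 * β ^ 2))))) =
      (∑ j, |v j|)⁻¹ *
        ∑ k, v k * erf (β * (∑ i, u k i * x i) / Real.sqrt (∑ i, (x i) ^ 2)) := by
  have h_int (m : Fin d → ℝ) : Integrable (fun w => Real.sign (∑ i, w i * x i))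
      (gaussPi m (Real.toNNReal (1 / (2 * β ^ 2)))) :=
    integrable_sign_comp _ (by fun_prop)
  have h_mix_int (c : Fin K → ℝ) (m : Fin K → Fin d → ℝ) : Integrable
      (fun w => Real.sign (∑ i, w i * x i))
      (∑ k, ENNReal.ofReal (c k) • gaussPi (m k) (Real.toNNReal (1 / (2 * β ^ 2)))) :=
    integrable_finsetSum_measure.2 fun k _ => (h_int _).smul_measure ENNReal.ofReal_ne_top
  have h_neg (k : Fin K) : ∑ i, -u k i * x i = -∑ i, u k i * x i := by
    simp only [neg_mul, Finset.sum_neg_distrib]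
  rw [integral_add_measure (h_mix_int _ _) (h_mix_int _ _),
    integral_finsetSum_ofReal_smul_measure _ (fun k _ => by positivity) fun k _ => h_int _,
    integral_finsetSum_ofReal_smul_measure _ (fun k _ => by positivity) fun k _ => h_int _,
    ← Finset.sum_add_distrib, Finset.mul_sum]
  refine Finset.sum_congr rfl fun k _ => ?_
  rw [integral_sign_dotProduct_gaussPi _ _ hβ, integral_sign_dotProduct_gaussPi _ _ hβ, h_neg,
    mul_neg, neg_div, erf_neg, max_comm 0 (v k), max_comm 0 (-v k)]
  linear_combination (erf (β * (∑ i, u k i * x i) / Real.sqrt (∑ i, x i ^ 2)) / ∑ j, |v j|)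
    * max_zero_sub_max_neg_zero_eq_self (v k)

/-- SHEL network as the expectation of a randomised sign predictor: for the mixture `Q`
with `2K` Gaussian components `N(±u_k, (1/(2β²))I_d)` weighted by `max(0, ±v_k)/‖v‖₁`,
`E_{w∼Q}[sign(w·x)] = (1/‖v‖₁) Σ_k v_k erf(β (u_k·x)/‖x‖₂)`. -/
theorem shel_as_expectation
    (d K : ℕ) (hd : 0 < d) (hK : 0 < K) (β : ℝ) (hβ : 0 < β)
    (u : Fin K → Fin d → ℝ) (v : Fin K → ℝ) (hv : v ≠ 0)
    (x : Fin d → ℝ) (hx : x ≠ 0) :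
    (∫ w, Real.sign (∑ i, w i * x i)
        ∂((∑ k : Fin K, ENNReal.ofReal (max 0 (v k) / ∑ j, |v j|) •
              gaussPi (u k) (Real.toNNReal (1 / (2 * β ^ 2)))) +
          ∑ k : Fin K, ENNReal.ofReal (max 0 (-v k) / ∑ j, |v j|) •
              gaussPi (fun i => -(u k i)) (Real.toNNReal (1 / (2 * β ^ 2))))) =
      (∑ j, |v j|)⁻¹ *
        ∑ k, v k * erf (β * (∑ i, u k i * x i) / Real.sqrt (∑ i, (x i) ^ 2)) :=
  shel_as_expectation_general d K β hβ u v x
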